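/- arXiv:2203.12183 — 8 statements merged into one kernel-verified Lean document; each statement's English description precedes it below -/
import Mathlib

section
/- Let N ≥ 1, q_c > 0, and let a be a symmetric N×N real matrix. For positions q_1,…,q_N ∈ ℝ³ with q_i ≠ q_j for all i ≠ j, define the potential V(q) = Σ_{i=1}^N Σ_{j=1}^N (a_ij/4) q_c (1 − q_ij/q_c)² δ_ij, where q_ij = ‖q_i − q_j‖ and δ_ij = 1 if q_ij < q_c, 0 otherwise. Then for each i, the function x ↦ V(q_1,…,q_{i−1},x,q_{i+1},…,q_N) is differentiable at q_i with gradient equal to −Σ_{j≠i} F^C_ij(q), where F^C_ij(q) = a_ij (1 − q_ij/q_c) δ_ij q̂_ij and q̂_ij = (q_i − q_j)/q_ij. -/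
open Finset

private lemma hasDerivAt_maxsq (t : ℝ) :
    HasDerivAt (fun s : ℝ => max s 0 ^ 2) (2 * max t 0) t := by
  rcases lt_trichotomy t 0 with h | h | h
  · have h0 : HasDerivAt (fun _ : ℝ => (0:ℝ)) 0 t := hasDerivAt_const t 0
    have he : (fun s : ℝ => max s 0 ^ 2) =ᶠ[nhds t] fun _ => (0:ℝ) := by
      filter_upwards [Iio_mem_nhds h] with s hs
      simp [max_eq_right (le_of_lt (Set.mem_Iio.mp hs))]
    simpa [max_eq_right h.le] using h0.congr_of_eventuallyEq he
  · subst h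
    rw [hasDerivAt_iff_isLittleO]
    have hO : (fun h : ℝ => max h 0 ^ 2) =O[nhds 0] fun h : ℝ => h ^ 2 := by
      refine Asymptotics.isBigO_of_le _ fun x => ?_
      have h1 : |max x 0| ≤ |x| := by
        rcases le_or_gt x 0 with hx | hx
        · simp [max_eq_right hx, abs_nonneg]
        · simp [max_eq_left hx.le]
      calc ‖max x 0 ^ 2‖ = |max x 0| ^ 2 := by rw [Real.norm_eq_abs, abs_pow, sq_abs, ← sq_abs]
        _ ≤ |x| ^ 2 := pow_le_pow_left₀ (abs_nonneg _) h1 2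
        _ = ‖x ^ 2‖ := by rw [Real.norm_eq_abs, abs_pow, sq_abs, ← sq_abs]
    have hlo : (fun h : ℝ => h ^ 2) =o[nhds 0] fun h : ℝ => h := by
      have := hasDerivAt_iff_isLittleO.mp (by simpa using hasDerivAt_pow 2 (0:ℝ))
      simpa using this
    simpa using hO.trans_isLittleO hlo
  · have h2 : HasDerivAt (fun s : ℝ => s ^ 2) (2 * t) t := by
      simpa using hasDerivAt_pow 2 t
    have he : (fun s : ℝ => max s 0 ^ 2) =ᶠ[nhds t] fun s => s ^ 2 := by
      filter_upwards [Ioi_mem_nhds h] with s hs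
      simp [max_eq_left (le_of_lt (Set.mem_Ioi.mp hs))]
    simpa [max_eq_left h.le] using h2.congr_of_eventuallyEq he

private lemma hasFDerivAt_norm_sub {E : Type*} [NormedAddCommGroup E] [InnerProductSpace ℝ E]
    (c p : E) (h : p ≠ c) :
    HasFDerivAt (fun x => ‖x - c‖) (‖p - c‖⁻¹ • innerSL ℝ (p - c)) p := by
  have hne : p - c ≠ 0 := sub_ne_zero.mpr h
  have h1 : HasFDerivAt (fun x : E => x - c) (ContinuousLinearMap.id ℝ E) p :=
    (hasFDerivAt_id p).sub_const c
  have h2 := h1.norm_sq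
  have hsq : (‖p - c‖ ^ 2 : ℝ) ≠ 0 := pow_ne_zero 2 (norm_ne_zero_iff.mpr hne)
  have h3 : HasDerivAt Real.sqrt (1 / (2 * Real.sqrt (‖p - c‖ ^ 2))) (‖p - c‖ ^ 2) :=
    Real.hasDerivAt_sqrt hsq
  have h4 := h3.comp_hasFDerivAt p h2
  have h5 : HasFDerivAt (fun x : E => Real.sqrt (‖x - c‖ ^ 2))
      ((1 / (2 * Real.sqrt (‖p - c‖ ^ 2))) •
        ((2 : ℕ) • (innerSL ℝ (p - c)).comp (ContinuousLinearMap.id ℝ E))) p := h4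
  have hfun : (fun x : E => Real.sqrt (‖x - c‖ ^ 2)) = fun x => ‖x - c‖ :=
    funext fun x => Real.sqrt_sq (norm_nonneg _)
  rw [hfun] at h5
  refine h5.congr_fderiv ?_
  ext y
  have hr : Real.sqrt (‖p - c‖ ^ 2) = ‖p - c‖ := Real.sqrt_sq (norm_nonneg _)
  simp only [ContinuousLinearMap.coe_smul', Pi.smul_apply, ContinuousLinearMap.coe_comp',
    Function.comp_apply, ContinuousLinearMap.coe_id', id_eq, hr, smul_eq_mul,
    ContinuousLinearMap.smul_apply, nsmul_eq_mul, Nat.cast_ofNat]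
  have hnz : ‖p - c‖ ≠ 0 := norm_ne_zero_iff.mpr hne
  field_simp

private lemma hasFDerivAt_maxsq_norm {E : Type*} [NormedAddCommGroup E] [InnerProductSpace ℝ E]
    (qc : ℝ) (c p : E) (h : p ≠ c) :
    HasFDerivAt (fun x => max (qc - ‖x - c‖) 0 ^ 2)
      ((-2 * max (qc - ‖p - c‖) 0 * ‖p - c‖⁻¹) • innerSL ℝ (p - c)) p := by
  have hn := hasFDerivAt_norm_sub c p h
  have hg : HasDerivAt (fun r : ℝ => max (qc - r) 0 ^ 2)
      (2 * max (qc - ‖p - c‖) 0 * (0 - 1)) ‖p - c‖ := by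
    have h1 : HasDerivAt (fun r : ℝ => qc - r) (0 - 1) ‖p - c‖ :=
      (hasDerivAt_const _ qc).sub (hasDerivAt_id ‖p - c‖)
    exact (hasDerivAt_maxsq (qc - ‖p - c‖)).comp _ h1
  have h4 := hg.comp_hasFDerivAt p hn
  refine (HasFDerivAt.congr_fderiv h4 ?_ : _)
  rw [smul_smul]
  congr 1
  ring

/-- For the DPD potential
`V(q) = Σ_i Σ_j (a_ij/4) q_c (1 - q_ij/q_c)² δ_ij`, the function obtained by varying the
position of the `i`-th particle is differentiable at `q_i` (in particular across the cutoff
surface) with gradient `-Σ_{j ≠ i} F^C_ij(q)`, where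
`F^C_ij(q) = a_ij (1 - q_ij/q_c) δ_ij q̂_ij`. -/
theorem dpd_conservative_force_is_neg_gradient_of_potential
    (N : ℕ) (hN : 1 ≤ N) (qc : ℝ) (hqc : 0 < qc)
    (a : Fin N → Fin N → ℝ) (ha : ∀ i j, a i j = a j i)
    (q : Fin N → EuclideanSpace ℝ (Fin 3))
    (hq : ∀ i j, i ≠ j → q i ≠ q j) (i : Fin N) :
    HasGradientAt
      (fun x : EuclideanSpace ℝ (Fin 3) =>
        ∑ i' : Fin N, ∑ j' : Fin N,
          (a i' j' / 4) * qc *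
            (1 - ‖Function.update q i x i' - Function.update q i x j'‖ / qc) ^ 2 *
            (if ‖Function.update q i x i' - Function.update q i x j'‖ < qc then 1 else 0))
      (-∑ j ∈ Finset.univ.erase i,
        (a i j * (1 - ‖q i - q j‖ / qc) *
            (if ‖q i - q j‖ < qc then 1 else 0)) •
          (‖q i - q j‖⁻¹ • (q i - q j)))
      (q i) := by
  classical
  have hqc' : qc ≠ 0 := ne_of_gt hqc
  rw [hasGradientAt_iff_hasFDerivAt]
  have hVeq : (fun x : EuclideanSpace ℝ (Fin 3) =>
        ∑ i' : Fin N, ∑ j' : Fin N,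
          (a i' j' / 4) * qc *
            (1 - ‖Function.update q i x i' - Function.update q i x j'‖ / qc) ^ 2 *
            (if ‖Function.update q i x i' - Function.update q i x j'‖ < qc then 1 else 0)) =
      (fun x : EuclideanSpace ℝ (Fin 3) =>
        ∑ i' : Fin N, ∑ j' : Fin N,
          (a i' j' / (4 * qc)) *
            max (qc - ‖Function.update q i x i' - Function.update q i x j'‖) 0 ^ 2) := by
    funext x
    refine Finset.sum_congr rfl fun i' _ => Finset.sum_congr rfl fun j' _ => ?_
    set r := ‖Function.update q i x i' - Function.update q i x j'‖ with hr
    by_cases hlt : r < qc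
    · rw [if_pos hlt, max_eq_left (by linarith)]
      field_simp
    · rw [if_neg hlt, max_eq_right (by linarith [not_lt.mp hlt])]
      simp
  rw [hVeq]
  set k : Fin N → ℝ := fun j =>
    (a i j / (4 * qc)) * (-2 * max (qc - ‖q i - q j‖) 0 * ‖q i - q j‖⁻¹) with hk
  set D : Fin N → (EuclideanSpace ℝ (Fin 3) →L[ℝ] ℝ) := fun j => innerSL ℝ (q i - q j) with hD
  set L : Fin N → Fin N → (EuclideanSpace ℝ (Fin 3) →L[ℝ] ℝ) := fun i' j' =>
    if i' = i then (if j' = i then 0 else k j' • D j')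
    else (if j' = i then k i' • D i' else 0) with hL
  have hterm : ∀ i' j' : Fin N,
      HasFDerivAt (fun x : EuclideanSpace ℝ (Fin 3) =>
        (a i' j' / (4 * qc)) *
          max (qc - ‖Function.update q i x i' - Function.update q i x j'‖) 0 ^ 2)
        (L i' j') (q i) := by
    intro i' j'
    by_cases hi' : i' = i <;> by_cases hj' : j' = i
    · simp only [hL]
      rw [if_pos hi', if_pos hj']
      have hfun : (fun x : EuclideanSpace ℝ (Fin 3) =>
          (a i' j' / (4 * qc)) *
            max (qc - ‖Function.update q i x i' - Function.update q i x j'‖) 0 ^ 2)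
          = fun _ => (a i i / (4 * qc)) * max (qc - 0) 0 ^ 2 := by
        funext x; rw [hi', hj']; simp
      rw [hfun]
      exact hasFDerivAt_const _ _
    · simp only [hL]
      rw [if_pos hi', if_neg hj']
      have hfun : (fun x : EuclideanSpace ℝ (Fin 3) =>
          (a i' j' / (4 * qc)) *
            max (qc - ‖Function.update q i x i' - Function.update q i x j'‖) 0 ^ 2)
          = fun x => (a i j' / (4 * qc)) * max (qc - ‖x - q j'‖) 0 ^ 2 := by
        funext x
        rw [hi', Function.update_self, Function.update_of_ne hj']
      rw [hfun]
      have hne : q i ≠ q j' := hq i j' (fun hij => hj' hij.symm)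
      have := (hasFDerivAt_maxsq_norm qc (q j') (q i) hne).const_mul (a i j' / (4 * qc))
      refine this.congr_fderiv ?_
      rw [smul_smul]
    · simp only [hL]
      rw [if_neg hi', if_pos hj']
      have hfun : (fun x : EuclideanSpace ℝ (Fin 3) =>
          (a i' j' / (4 * qc)) *
            max (qc - ‖Function.update q i x i' - Function.update q i x j'‖) 0 ^ 2)
          = fun x => (a i i' / (4 * qc)) * max (qc - ‖x - q i'‖) 0 ^ 2 := by
        funext x
        rw [hj', Function.update_self, Function.update_of_ne hi', norm_sub_rev, ha i' i]
      rw [hfun]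
      have hne : q i ≠ q i' := hq i i' (fun hij => hi' hij.symm)
      have := (hasFDerivAt_maxsq_norm qc (q i') (q i) hne).const_mul (a i i' / (4 * qc))
      refine this.congr_fderiv ?_
      rw [smul_smul]
    · simp only [hL]
      rw [if_neg hi', if_neg hj']
      have hfun : (fun x : EuclideanSpace ℝ (Fin 3) =>
          (a i' j' / (4 * qc)) *
            max (qc - ‖Function.update q i x i' - Function.update q i x j'‖) 0 ^ 2)
          = fun _ => (a i' j' / (4 * qc)) * max (qc - ‖q i' - q j'‖) 0 ^ 2 := by
        funext x
        rw [Function.update_of_ne hi', Function.update_of_ne hj']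
      rw [hfun]
      exact hasFDerivAt_const _ _
  have hsum : HasFDerivAt (fun x : EuclideanSpace ℝ (Fin 3) =>
      ∑ i' : Fin N, ∑ j' : Fin N,
        (a i' j' / (4 * qc)) *
          max (qc - ‖Function.update q i x i' - Function.update q i x j'‖) 0 ^ 2)
      (∑ i' : Fin N, ∑ j' : Fin N, L i' j') (q i) :=
    HasFDerivAt.fun_sum fun i' _ => HasFDerivAt.fun_sum fun j' _ => hterm i' j'
  refine hsum.congr_fderiv ?_
  -- RHS sum computation
  have hrow_i : (∑ j' : Fin N, L i j') = ∑ j ∈ Finset.univ.erase i, k j • D j := by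
    rw [← Finset.sum_erase_add _ _ (mem_univ i)]
    simp only [hL, if_pos rfl]
    rw [if_true, add_zero]
    refine Finset.sum_congr rfl fun j hj => ?_
    rw [if_neg (Finset.ne_of_mem_erase hj)]
  have hrow_ne : ∀ i' : Fin N, i' ≠ i → (∑ j' : Fin N, L i' j') = k i' • D i' := by
    intro i' hi'
    simp only [hL, if_neg hi']
    rw [Finset.sum_ite_eq' univ i (fun _ => k i' • D i'), if_pos (mem_univ i)]
  have htot : (∑ i' : Fin N, ∑ j' : Fin N, L i' j')
      = ∑ j ∈ Finset.univ.erase i, (2 * k j) • D j := by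
    rw [← Finset.sum_erase_add _ _ (mem_univ i), hrow_i,
      Finset.sum_congr rfl (fun i' hi' => hrow_ne i' (Finset.ne_of_mem_erase hi')),
      ← Finset.sum_add_distrib]
    refine Finset.sum_congr rfl fun j _ => ?_
    rw [two_mul, add_smul]
  rw [htot, map_neg, map_sum]
  rw [← Finset.sum_neg_distrib]
  refine Finset.sum_congr rfl fun j hj => ?_
  have hji : j ≠ i := Finset.ne_of_mem_erase hj
  have hne : q i ≠ q j := hq i j (fun hij => hji hij.symm)
  have hrpos : (0:ℝ) < ‖q i - q j‖ := norm_pos_iff.mpr (sub_ne_zero.mpr hne)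
  have hr0 : ‖q i - q j‖ ≠ 0 := ne_of_gt hrpos
  have hdual : (InnerProductSpace.toDual ℝ (EuclideanSpace ℝ (Fin 3))) (q i - q j)
      = innerSL ℝ (q i - q j) := rfl
  rw [map_smul, map_smul, hdual, smul_smul, ← neg_smul]
  simp only [hD, hk]
  congr 1
  by_cases hlt : ‖q i - q j‖ < qc
  · rw [if_pos hlt, max_eq_left (by linarith)]
    field_simp
    ring
  · rw [if_neg hlt, max_eq_right (by linarith [not_lt.mp hlt])]
    simp
end

section
/- Let q_c > 0 and σ ∈ ℝ, and define h : ℝ³ × ℝ³ → ℝ by h(x,y) = (σ/4) q_c (1 − ‖x−y‖/q_c)² δ, where δ = 1 if ‖x−y‖ < q_c and 0 otherwise. Then for all x ≠ y, h is differentiable in each argument, with gradient with respect to x equal to −(σ/2) ω^R(‖x−y‖) (x−y)/‖x−y‖ and gradient with respect to y equal to −(σ/2) ω^R(‖x−y‖) (y−x)/‖x−y‖, where ω^R(r) = (1 − r/q_c) if r < q_c and 0 otherwise. -/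
open Real

lemma max_sq_hasDerivAt (t : ℝ) :
    HasDerivAt (fun s : ℝ => (max s 0) ^ 2) (2 * max t 0) t := by
  rcases lt_trichotomy t 0 with ht | ht | ht
  · have hmax : max t 0 = 0 := max_eq_right ht.le
    rw [hmax, mul_zero]
    have hev : (fun s : ℝ => (max s 0) ^ 2) =ᶠ[nhds t] fun _ => (0 : ℝ) := by
      filter_upwards [Iio_mem_nhds ht] with s hs
      rw [Set.mem_Iio] at hs
      simp [max_eq_right hs.le]
    exact (hasDerivAt_const t (0 : ℝ)).congr_of_eventuallyEq hev
  · subst ht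
    rw [max_self, mul_zero]
    rw [hasDerivAt_iff_isLittleO, Asymptotics.isLittleO_iff]
    intro ε hε
    filter_upwards [Metric.ball_mem_nhds 0 hε] with s hs
    simp only [Metric.mem_ball, Real.dist_eq, sub_zero] at hs
    have h1 : |max s 0| ≤ |s| := by
      rcases le_or_gt s 0 with h | h
      · simp [max_eq_right h]
      · simp [max_eq_left h.le]
    have h2 : ‖(max s 0) ^ 2‖ ≤ ε * ‖s‖ := by
      rw [Real.norm_eq_abs, Real.norm_eq_abs, abs_pow, sq]
      exact mul_le_mul (le_of_lt (lt_of_le_of_lt h1 hs)) h1 (abs_nonneg _) hε.le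
    simpa using h2
  · have hmax : max t 0 = t := max_eq_left ht.le
    rw [hmax]
    have hev : (fun s : ℝ => (max s 0) ^ 2) =ᶠ[nhds t] fun s => s ^ 2 := by
      filter_upwards [Ioi_mem_nhds ht] with s hs
      rw [Set.mem_Ioi] at hs
      simp [max_eq_left hs.le]
    have hp := hasDerivAt_pow 2 t
    norm_num at hp
    exact hp.congr_of_eventuallyEq hev

lemma hasFDerivAt_norm' {F : Type*} [NormedAddCommGroup F] [InnerProductSpace ℝ F]
    {v : F} (hv : v ≠ 0) :
    HasFDerivAt (fun w : F => ‖w‖) (‖v‖⁻¹ • innerSL ℝ v) v := by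
  have h1 : HasFDerivAt (fun w : F => ‖w‖ ^ 2) (2 • innerSL ℝ v) v :=
    (hasStrictFDerivAt_norm_sq v).hasFDerivAt
  have hv2 : ‖v‖ ^ 2 ≠ 0 := pow_ne_zero _ (norm_ne_zero_iff.mpr hv)
  have h2 := h1.sqrt hv2
  have hs : √(‖v‖ ^ 2) = ‖v‖ := Real.sqrt_sq (norm_nonneg v)
  have heq : (fun w : F => √(‖w‖ ^ 2)) = fun w : F => ‖w‖ := by
    funext w; exact Real.sqrt_sq (norm_nonneg w)
  rw [heq, hs] at h2
  have hvn : ‖v‖ ≠ 0 := norm_ne_zero_iff.mpr hv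
  have hL : (‖v‖⁻¹ • innerSL ℝ v : F →L[ℝ] ℝ) = (1 / (2 * ‖v‖)) • 2 • innerSL ℝ v := by
    ext w
    simp only [ContinuousLinearMap.smul_apply]
    simp only [smul_eq_mul, nsmul_eq_mul, Nat.cast_ofNat]
    field_simp
  rw [hL]
  exact h2

lemma dpd_key {F : Type*} [NormedAddCommGroup F] [InnerProductSpace ℝ F] [CompleteSpace F]
    (qc σ : ℝ) (hqc : 0 < qc) (c : F) {p : F} (hp : p ≠ c) :
    HasGradientAt (fun w : F => (σ / 4) * qc * (max (1 - ‖w - c‖ / qc) 0) ^ 2)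
      ((-(σ / 2) * max (1 - ‖p - c‖ / qc) 0) • (‖p - c‖⁻¹ • (p - c))) p := by
  set v := p - c with hv
  have hvne : v ≠ 0 := sub_ne_zero.mpr hp
  set r := ‖v‖ with hr
  -- fderiv of w ↦ ‖w - c‖ at p
  have step1 : HasFDerivAt (fun w : F => ‖w - c‖) (r⁻¹ • innerSL ℝ v) p := by
    have := (hasFDerivAt_norm' hvne).comp p ((hasFDerivAt_id p).sub_const c)
    exact this
  -- deriv of the scalar profile
  have hu : HasDerivAt (fun t : ℝ => 1 - t / qc) (-(1 / qc)) r := by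
    simpa using ((hasDerivAt_id r).div_const qc).const_sub 1
  have step2 : HasDerivAt (fun t : ℝ => (σ / 4) * qc * (max (1 - t / qc) 0) ^ 2)
      ((σ / 4) * qc * (2 * max (1 - r / qc) 0 * -(1 / qc))) r := by
    have hcomp := (max_sq_hasDerivAt (1 - r / qc)).comp r hu
    simpa [mul_assoc] using hcomp.const_mul ((σ / 4) * qc)
  have step3 := step2.comp_hasFDerivAt p step1
  have hqc' : qc ≠ 0 := ne_of_gt hqc
  have hscal : (σ / 4) * qc * (2 * max (1 - r / qc) 0 * -(1 / qc))
      = -(σ / 2) * max (1 - r / qc) 0 := by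
    field_simp
    ring
  rw [hscal] at step3
  rw [hasGradientAt_iff_hasFDerivAt]
  convert step3 using 1
  · rfl
  · rfl
  ext w
  simp only [InnerProductSpace.toDual_apply_apply, ContinuousLinearMap.smul_apply,
    innerSL_apply_apply, smul_eq_mul, inner_smul_left, RCLike.conj_to_real]

/-- The stochastic Hamiltonian `h(x,y) = (σ/4) q_c (1 - ‖x-y‖/q_c)² δ` of the DPD system
(with `δ = 1` if `‖x-y‖ < q_c` and `0` otherwise) is, for `x ≠ y`, differentiable in each
argument — in particular across the cutoff `‖x-y‖ = q_c` — with gradients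
`∇ₓ h = -(σ/2) ω^R(‖x-y‖) (x-y)/‖x-y‖` and `∇_y h = -(σ/2) ω^R(‖x-y‖) (y-x)/‖x-y‖`,
where `ω^R(r) = (1 - r/q_c)` for `r < q_c` and `0` otherwise. -/
theorem dpd_stochastic_hamiltonian_gradients (qc : ℝ) (hqc : 0 < qc) (σ : ℝ)
    (h : EuclideanSpace ℝ (Fin 3) → EuclideanSpace ℝ (Fin 3) → ℝ)
    (hh : h = fun x y => (σ / 4) * qc * (1 - ‖x - y‖ / qc) ^ 2 *
      (if ‖x - y‖ < qc then 1 else 0))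
    (ωR : ℝ → ℝ) (hωR : ωR = fun r => if r < qc then 1 - r / qc else 0)
    (x y : EuclideanSpace ℝ (Fin 3)) (hxy : x ≠ y) :
    HasGradientAt (fun x' => h x' y)
      ((-(σ / 2) * ωR ‖x - y‖) • (‖x - y‖⁻¹ • (x - y))) x ∧
    HasGradientAt (fun y' => h x y')
      ((-(σ / 2) * ωR ‖x - y‖) • (‖x - y‖⁻¹ • (y - x))) y := by
  have hmain : ∀ r : ℝ, (σ / 4) * qc * (1 - r / qc) ^ 2 * (if r < qc then 1 else 0)
      = (σ / 4) * qc * (max (1 - r / qc) 0) ^ 2 := by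
    intro r
    by_cases hr : r < qc
    · have : (0 : ℝ) ≤ 1 - r / qc := by
        rw [sub_nonneg, div_le_one hqc]; exact hr.le
      rw [if_pos hr, max_eq_left this]; ring
    · have : 1 - r / qc ≤ 0 := by
        rw [sub_nonpos, le_div_iff₀ hqc, one_mul]; exact not_lt.mp hr
      rw [if_neg hr, max_eq_right this]; ring
  have hω : ∀ r : ℝ, ωR r = max (1 - r / qc) 0 := by
    intro r
    rw [hωR]
    by_cases hr : r < qc
    · have : (0 : ℝ) ≤ 1 - r / qc := by
        rw [sub_nonneg, div_le_one hqc]; exact hr.le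
      simp [hr, max_eq_left this]
    · have : 1 - r / qc ≤ 0 := by
        rw [sub_nonpos, le_div_iff₀ hqc, one_mul]; exact not_lt.mp hr
      simp [hr, max_eq_right this]
  constructor
  · have := dpd_key qc σ hqc y hxy
    have hfun : (fun x' => h x' y)
        = fun w => (σ / 4) * qc * (max (1 - ‖w - y‖ / qc) 0) ^ 2 := by
      funext w; rw [hh]; exact hmain _
    rw [hfun, hω]
    exact this
  · have := dpd_key qc σ hqc x (fun hyx => hxy hyx.symm)
    have hfun : (fun y' => h x y')
        = fun w => (σ / 4) * qc * (max (1 - ‖w - x‖ / qc) 0) ^ 2 := by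
      funext w; rw [hh, norm_sub_rev]; exact hmain _
    rw [hfun, hω, norm_sub_rev x y]
    exact this
end

section
/- Let N ≥ 1, q_c > 0, γ ∈ ℝ, masses m_1,…,m_N > 0, positions q_1,…,q_N ∈ ℝ³ with q_i ≠ q_j for i ≠ j, and momenta p_1,…,p_N ∈ ℝ³. Then the power of the dissipative forces satisfies the identity Σ_{i=1}^N ⟨F^D_i(q,p), p_i/m_i⟩ = −(γ/2) Σ_{i=1}^N Σ_{j≠i} ω^D(q_ij) ⟨q̂_ij, v_ij⟩². In particular, if γ ≥ 0 then Σ_{i=1}^N ⟨F^D_i(q,p), p_i/m_i⟩ ≤ 0, so the forces F^D_i lead to dissipation of the total energy. -/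
open Finset

/-- The power of the DPD dissipative forces satisfies
`Σ_i ⟨F^D_i(q,p), p_i/m_i⟩ = -(γ/2) Σ_i Σ_{j≠i} ω^D(q_ij) ⟨q̂_ij, v_ij⟩²`;
in particular, if `γ ≥ 0` then `Σ_i ⟨F^D_i(q,p), p_i/m_i⟩ ≤ 0`, i.e. the forces `F^D_i`
lead to dissipation of the total energy. -/
theorem dpd_dissipative_force_power
    (N : ℕ) (hN : 1 ≤ N) (qc : ℝ) (hqc : 0 < qc) (γ : ℝ)
    (m : Fin N → ℝ) (hm : ∀ i, 0 < m i)
    (q p : Fin N → EuclideanSpace ℝ (Fin 3))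
    (hq : ∀ i j, i ≠ j → q i ≠ q j)
    (ωR : ℝ → ℝ) (hωR : ωR = fun r => if r < qc then 1 - r / qc else 0)
    (FD : Fin N → EuclideanSpace ℝ (Fin 3))
    (hFD : FD = fun i =>
      (-γ) • ∑ j ∈ Finset.univ.erase i,
        ((ωR ‖q i - q j‖) ^ 2 *
            (inner ℝ (‖q i - q j‖⁻¹ • (q i - q j))
              ((m i)⁻¹ • p i - (m j)⁻¹ • p j) : ℝ)) •
          (‖q i - q j‖⁻¹ • (q i - q j))) :
    (∑ i : Fin N, (inner ℝ (FD i) ((m i)⁻¹ • p i) : ℝ) =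
      -(γ / 2) * ∑ i : Fin N, ∑ j ∈ Finset.univ.erase i,
        (ωR ‖q i - q j‖) ^ 2 *
          (inner ℝ (‖q i - q j‖⁻¹ • (q i - q j))
            ((m i)⁻¹ • p i - (m j)⁻¹ • p j) : ℝ) ^ 2) ∧
    (0 ≤ γ → ∑ i : Fin N, (inner ℝ (FD i) ((m i)⁻¹ • p i) : ℝ) ≤ 0) := by
  set v : Fin N → EuclideanSpace ℝ (Fin 3) := fun i => (m i)⁻¹ • p i with hv
  set u : Fin N → Fin N → EuclideanSpace ℝ (Fin 3) :=
    fun i j => ‖q i - q j‖⁻¹ • (q i - q j) with hu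
  set g : Fin N → Fin N → ℝ := fun i j =>
    (ωR ‖q i - q j‖) ^ 2 * (inner ℝ (u i j) (v i - v j) : ℝ) * (inner ℝ (u i j) (v i) : ℝ)
    with hg
  set S : ℝ := ∑ i : Fin N, ∑ j ∈ Finset.univ.erase i,
      (ωR ‖q i - q j‖) ^ 2 * (inner ℝ (u i j) (v i - v j) : ℝ) ^ 2 with hS
  -- swap lemma
  have swap : ∀ (f : Fin N → Fin N → ℝ),
      ∑ i : Fin N, ∑ j ∈ Finset.univ.erase i, f i j
        = ∑ i : Fin N, ∑ j ∈ Finset.univ.erase i, f j i := by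
    intro f
    have h1 : ∀ (f : Fin N → Fin N → ℝ) (i : Fin N),
        ∑ j ∈ Finset.univ.erase i, f i j
          = ∑ j : Fin N, if j ≠ i then f i j else 0 := by
      intro f i
      rw [← Finset.sum_filter]
      congr 1
      ext j
      simp [Finset.mem_erase, and_comm]
    calc ∑ i : Fin N, ∑ j ∈ Finset.univ.erase i, f i j
        = ∑ i : Fin N, ∑ j : Fin N, if j ≠ i then f i j else 0 := by
          exact Finset.sum_congr rfl fun i _ => h1 f i
      _ = ∑ j : Fin N, ∑ i : Fin N, if j ≠ i then f i j else 0 := Finset.sum_comm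
      _ = ∑ j : Fin N, ∑ i ∈ Finset.univ.erase j, f i j := by
          refine Finset.sum_congr rfl fun j _ => ?_
          rw [h1 (fun a b => f b a) j]
          exact Finset.sum_congr rfl fun i _ => by
            rcases eq_or_ne i j with h | h <;> simp [h, Ne.symm]
  -- pointwise symmetrization
  have pair : ∀ i j : Fin N, g i j + g j i
      = (ωR ‖q i - q j‖) ^ 2 * (inner ℝ (u i j) (v i - v j) : ℝ) ^ 2 := by
    intro i j
    have hn : ‖q j - q i‖ = ‖q i - q j‖ := norm_sub_rev _ _
    have huji : u j i = -(u i j) := by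
      show ‖q j - q i‖⁻¹ • (q j - q i) = -(‖q i - q j‖⁻¹ • (q i - q j))
      rw [hn, ← neg_sub (q i) (q j), smul_neg]
    have h1 : (inner ℝ (u j i) (v j - v i) : ℝ) = inner ℝ (u i j) (v i - v j) := by
      rw [huji, ← neg_sub (v i) (v j), inner_neg_neg]
    have h2 : (inner ℝ (u j i) (v j) : ℝ) = -(inner ℝ (u i j) (v j)) := by
      rw [huji, inner_neg_left]
    have h3 : (inner ℝ (u i j) (v i - v j) : ℝ)
        = inner ℝ (u i j) (v i) - inner ℝ (u i j) (v j) := inner_sub_right _ _ _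
    simp only [hg]
    rw [h1, h2, hn, h3]; ring
  have double : ∑ i : Fin N, ∑ j ∈ Finset.univ.erase i, g i j = S / 2 := by
    have : 2 * ∑ i : Fin N, ∑ j ∈ Finset.univ.erase i, g i j = S := by
      rw [two_mul]
      nth_rewrite 2 [swap g]
      rw [← Finset.sum_add_distrib]
      rw [hS]
      congr 1; ext i
      rw [← Finset.sum_add_distrib]
      exact Finset.sum_congr rfl fun j _ => pair i j
    linarith
  have lhs_eq : ∑ i : Fin N, (inner ℝ (FD i) (v i) : ℝ)
      = -γ * ∑ i : Fin N, ∑ j ∈ Finset.univ.erase i, g i j := by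
    subst hFD
    simp only [hg, hu, hv, real_inner_smul_left, sum_inner, Finset.mul_sum]
  refine ⟨?_, ?_⟩
  · rw [lhs_eq, double, hS]
    ring
  · intro hγ
    rw [lhs_eq, double]
    have hS0 : 0 ≤ S := by
      apply Finset.sum_nonneg; intro i _
      apply Finset.sum_nonneg; intro j _
      positivity
    nlinarith
end

section
/- Let 0 ≤ ε < 2, ω = √(4 − ε²)/2, σ ∈ ℝ, (q₀,p₀) ∈ ℝ², and let q̄(s) = e^{−εs/2}(q₀ cos ωs + (1/ω)(p₀ + (ε/2)q₀) sin ωs), p̄(s) = e^{−εs/2}(p₀ cos ωs − (1/ω)(q₀ + (ε/2)p₀) sin ωs). Let W : ℝ → ℝ be any differentiable function with W(0) = 0, and set Q(t) = q̄(t + σW(t)), P(t) = p̄(t + σW(t)). Then Q(0) = q₀, P(0) = p₀, and for every t ∈ ℝ, Q'(t) = (1 + σW'(t)) P(t) and P'(t) = (1 + σW'(t)) (−Q(t) − ε P(t)). -/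
/-- Along any differentiable noise path `W` with `W(0) = 0`, the time-changed functions
`Q(t) = q̄(t + σW(t))`, `P(t) = p̄(t + σW(t))` built from the exact solution formulas of
the damped Kubo oscillator satisfy the initial conditions and the (Stratonovich-type)
equations `Q' = (1 + σW')P`, `P' = (1 + σW')(-Q - εP)`. -/
theorem damped_kubo_exact_solution_with_noise
    (ε : ℝ) (hε0 : 0 ≤ ε) (hε2 : ε < 2)
    (ω : ℝ) (hω : ω = Real.sqrt (4 - ε ^ 2) / 2) (σ : ℝ)
    (q0 p0 : ℝ) (qbar pbar : ℝ → ℝ)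
    (hqbar : qbar = fun s => Real.exp (-ε * s / 2) *
      (q0 * Real.cos (ω * s) + (1 / ω) * (p0 + (ε / 2) * q0) * Real.sin (ω * s)))
    (hpbar : pbar = fun s => Real.exp (-ε * s / 2) *
      (p0 * Real.cos (ω * s) - (1 / ω) * (q0 + (ε / 2) * p0) * Real.sin (ω * s)))
    (W : ℝ → ℝ) (hW : Differentiable ℝ W) (hW0 : W 0 = 0)
    (Q P : ℝ → ℝ)
    (hQ : Q = fun t => qbar (t + σ * W t))
    (hP : P = fun t => pbar (t + σ * W t)) :
    Q 0 = q0 ∧ P 0 = p0 ∧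
    ∀ t : ℝ, HasDerivAt Q ((1 + σ * deriv W t) * P t) t ∧
      HasDerivAt P ((1 + σ * deriv W t) * (-Q t - ε * P t)) t := by
  have h4 : 0 < 4 - ε ^ 2 := by nlinarith
  have hωpos : 0 < ω := by rw [hω]; positivity
  have hωne : ω ≠ 0 := ne_of_gt hωpos
  have hω2 : ω ^ 2 = 1 - ε ^ 2 / 4 := by
    rw [hω, div_pow, Real.sq_sqrt h4.le]; ring
  -- generic derivative of e^{-εs/2}(a cos ωs + b sin ωs)
  have key : ∀ (a b s : ℝ),
      HasDerivAt (fun s => Real.exp (-ε * s / 2) *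
          (a * Real.cos (ω * s) + b * Real.sin (ω * s)))
        (Real.exp (-ε * s / 2) *
          ((-ε / 2) * (a * Real.cos (ω * s) + b * Real.sin (ω * s))
            + (b * ω * Real.cos (ω * s) - a * ω * Real.sin (ω * s)))) s := by
    intro a b s
    have h1 : HasDerivAt (fun s : ℝ => -ε * s / 2) (-ε / 2) s := by
      simpa using ((hasDerivAt_id s).const_mul (-ε)).div_const 2
    have he := h1.exp
    have hid : HasDerivAt (fun s : ℝ => ω * s) ω s := by
      simpa using (hasDerivAt_id s).const_mul ω
    have hc : HasDerivAt (fun s => Real.cos (ω * s)) (-Real.sin (ω * s) * ω) s :=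
      (Real.hasDerivAt_cos (ω * s)).comp s hid
    have hs : HasDerivAt (fun s => Real.sin (ω * s)) (Real.cos (ω * s) * ω) s :=
      (Real.hasDerivAt_sin (ω * s)).comp s hid
    have := he.fun_mul ((hc.const_mul a).fun_add (hs.const_mul b))
    exact this.congr_deriv (by ring)
  have hqd : ∀ s, HasDerivAt qbar (pbar s) s := by
    intro s
    rw [hqbar, hpbar]
    have := key q0 ((1 / ω) * (p0 + (ε / 2) * q0)) s
    convert this using 1
    beta_reduce
    generalize Real.exp (-ε * s / 2) = E
    field_simp
    linear_combination (E * Real.sin (ω * s) * q0 * 4) * hω2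
  have hpd : ∀ s, HasDerivAt pbar (-qbar s - ε * pbar s) s := by
    intro s
    rw [hqbar, hpbar]
    have hfun : (fun s => Real.exp (-ε * s / 2) *
        (p0 * Real.cos (ω * s) - (1 / ω) * (q0 + (ε / 2) * p0) * Real.sin (ω * s)))
        = (fun s => Real.exp (-ε * s / 2) *
        (p0 * Real.cos (ω * s) + (-((1 / ω) * (q0 + (ε / 2) * p0))) * Real.sin (ω * s))) := by
      funext s; ring
    rw [hfun]
    have := key p0 (-((1 / ω) * (q0 + (ε / 2) * p0))) s
    convert this using 1
    beta_reduce
    generalize Real.exp (-ε * s / 2) = E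
    field_simp
    linear_combination (E * Real.sin (ω * s) * p0 * 4) * hω2
  have hτ : ∀ t, HasDerivAt (fun t => t + σ * W t) (1 + σ * deriv W t) t := by
    intro t
    exact (hasDerivAt_id t).add (((hW t).hasDerivAt).const_mul σ)
  refine ⟨?_, ?_, ?_⟩
  · rw [hQ, hqbar]; simp [hW0]
  · rw [hP, hpbar]; simp [hW0]
  · intro t
    constructor
    · have := (hqd (t + σ * W t)).comp t (hτ t)
      rw [hQ, hP]
      simpa [mul_comm, Function.comp_def] using this
    · have := (hpd (t + σ * W t)).comp t (hτ t)
      rw [hQ, hP]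
      simpa [mul_comm, Function.comp_def] using this
end

section
/- Let 0 ≤ ε < 2, ω = √(4 − ε²)/2, (q₀,p₀) ∈ ℝ², and let q̄(s) = e^{−εs/2}(q₀ cos ωs + (1/ω)(p₀ + (ε/2)q₀) sin ωs), p̄(s) = e^{−εs/2}(p₀ cos ωs − (1/ω)(q₀ + (ε/2)p₀) sin ωs). Then for every s ∈ ℝ, (q̄(s)² + p̄(s)²)/2 = a e^{−εs} + e^{−εs}( b cos(2ωs) + c sin(2ωs) ), where a = 2(q₀² + p₀² + ε q₀ p₀)/(4 − ε²), b = −(ε²(q₀² + p₀²) + 4ε q₀ p₀)/(2(4 − ε²)), and c = ε(q₀² − p₀²)/(2√(4 − ε²)). -/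
/-- Deterministic core of the expected Hamiltonian formula for the damped Kubo oscillator:
along the zero noise path, `(q̄(s)² + p̄(s)²)/2 = a e^{-εs} + e^{-εs}(b cos 2ωs + c sin 2ωs)`
with the stated constants `a`, `b`, `c`. -/
theorem damped_kubo_hamiltonian_identity
    (ε : ℝ) (hε0 : 0 ≤ ε) (hε2 : ε < 2)
    (ω : ℝ) (hω : ω = Real.sqrt (4 - ε ^ 2) / 2)
    (q0 p0 : ℝ) (qbar pbar : ℝ → ℝ)
    (hqbar : qbar = fun s => Real.exp (-ε * s / 2) *
      (q0 * Real.cos (ω * s) + (1 / ω) * (p0 + (ε / 2) * q0) * Real.sin (ω * s)))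
    (hpbar : pbar = fun s => Real.exp (-ε * s / 2) *
      (p0 * Real.cos (ω * s) - (1 / ω) * (q0 + (ε / 2) * p0) * Real.sin (ω * s)))
    (a b c : ℝ)
    (ha : a = 2 * (q0 ^ 2 + p0 ^ 2 + ε * q0 * p0) / (4 - ε ^ 2))
    (hb : b = -(ε ^ 2 * (q0 ^ 2 + p0 ^ 2) + 4 * ε * q0 * p0) / (2 * (4 - ε ^ 2)))
    (hc : c = ε * (q0 ^ 2 - p0 ^ 2) / (2 * Real.sqrt (4 - ε ^ 2))) :
    ∀ s : ℝ, (qbar s ^ 2 + pbar s ^ 2) / 2 =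
      a * Real.exp (-ε * s) +
        Real.exp (-ε * s) * (b * Real.cos (2 * ω * s) + c * Real.sin (2 * ω * s)) := by
  intro s
  have h4 : (0:ℝ) < 4 - ε ^ 2 := by nlinarith
  have hsq : Real.sqrt (4 - ε ^ 2) = 2 * ω := by
    rw [hω]; ring
  have hω2 : ω ^ 2 = (4 - ε ^ 2) / 4 := by
    rw [hω, div_pow, Real.sq_sqrt h4.le]; norm_num
  have hωpos : 0 < ω := by
    rw [hω]; positivity
  have hωne : ω ≠ 0 := hωpos.ne'
  have hE : Real.exp (-ε * s) = Real.exp (-ε * s / 2) ^ 2 := by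
    rw [← Real.exp_nat_mul]; ring_nf
  have hcos2 : Real.cos (2 * ω * s) = Real.cos (ω * s) ^ 2 - Real.sin (ω * s) ^ 2 := by
    rw [show 2 * ω * s = 2 * (ω * s) by ring, Real.cos_two_mul']
  have hsin2 : Real.sin (2 * ω * s) = 2 * Real.sin (ω * s) * Real.cos (ω * s) := by
    rw [show 2 * ω * s = 2 * (ω * s) by ring, Real.sin_two_mul]
  have hpyth : Real.sin (ω * s) ^ 2 + Real.cos (ω * s) ^ 2 = 1 :=
    Real.sin_sq_add_cos_sq _
  subst hqbar hpbar ha hb hc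
  simp only
  rw [hsq, hE, hcos2, hsin2]
  set C := Real.cos (ω * s)
  set S := Real.sin (ω * s)
  set e := Real.exp (-ε * s / 2)
  have h4ne : (4 - ε ^ 2) ≠ 0 := h4.ne'
  field_simp
  linear_combination e^2*16*ω^2*(q0^2+p0^2+ε*q0*p0) * hpyth - 4*e^2*S^2*((4+ε^2)*(q0^2+p0^2)+8*ε*q0*p0) * hω2
end

section
/- Let t > 0 and λ, μ, φ ∈ ℝ. Then ∫ exp(λx) cos(μx + φ) d(gaussianReal 0 t)(x) = exp((λ² − μ²)t/2) cos(λμt + φ), where gaussianReal 0 t is the Gaussian probability measure on ℝ with mean 0 and variance t. -/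
open ProbabilityTheory MeasureTheory Real Complex

/-- Gaussian integral: for the Gaussian measure on `ℝ` with mean `0` and variance `t > 0`,
`∫ exp(λx) cos(μx + φ) = exp((λ² - μ²)t/2) cos(λμt + φ)`. -/
theorem gaussian_integral_exp_mul_cos
    (t : ℝ) (ht : 0 < t) (lam mu phi : ℝ) :
    ∫ x, Real.exp (lam * x) * Real.cos (mu * x + phi)
        ∂(gaussianReal 0 ⟨t, ht.le⟩) =
      Real.exp ((lam ^ 2 - mu ^ 2) * t / 2) * Real.cos (lam * mu * t + phi) := by
  set v : NNReal := ⟨t, ht.le⟩ with hv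
  have hv0 : v ≠ 0 := by
    intro h
    exact ht.ne' (congrArg (fun x : NNReal => (x : ℝ)) h)
  have hvt : (v : ℝ) = t := rfl
  -- rewrite as integral against the pdf
  rw [gaussianReal_of_var_ne_zero 0 hv0]
  have hpdf : (gaussianPDF 0 v) = fun x => ((Real.toNNReal (gaussianPDFReal 0 v x) : NNReal) : ENNReal) := by
    funext x
    rfl
  have hmeas : Measurable fun x => Real.toNNReal (gaussianPDFReal 0 v x) :=
    (measurable_gaussianPDFReal 0 v).real_toNNReal
  rw [hpdf, integral_withDensity_eq_integral_smul hmeas]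
  -- complexification setup
  set b : ℂ := ((-(2 * t)⁻¹ : ℝ) : ℂ) with hb
  have hbre : b.re < 0 := by
    simp [hb]
    positivity
  set c : ℂ := (lam : ℂ) + (mu : ℂ) * Complex.I with hc
  set d : ℂ := (phi : ℂ) * Complex.I with hd
  -- pointwise identity
  have key : ∀ x : ℝ, (Real.toNNReal (gaussianPDFReal 0 v x)) •
      (Real.exp (lam * x) * Real.cos (mu * x + phi)) =
      (Real.sqrt (2 * π * t))⁻¹ * (Complex.exp (b * (x : ℂ) ^ 2 + c * (x : ℂ) + d)).re := by
    intro x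
    rw [NNReal.smul_def, smul_eq_mul, Real.coe_toNNReal _ (gaussianPDFReal_nonneg 0 v x)]
    have hre : (b * (x : ℂ) ^ 2 + c * (x : ℂ) + d).re = -x ^ 2 / (2 * t) + lam * x := by
      simp [hb, hc, hd, ← Complex.ofReal_pow]
      ring
    have him : (b * (x : ℂ) ^ 2 + c * (x : ℂ) + d).im = mu * x + phi := by
      simp [hb, hc, hd, ← Complex.ofReal_pow]
    rw [Complex.exp_re, hre, him, gaussianPDFReal, hvt, sub_zero, Real.exp_add]
    ring
  simp_rw [key]
  rw [integral_const_mul]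
  simp_rw [← RCLike.re_to_complex]
  rw [integral_re (integrable_cexp_quadratic' hbre c d)]
  simp_rw [RCLike.re_to_complex]
  rw [integral_cexp_quadratic hbre c d]
  -- evaluate the closed form
  have ht' : (t : ℂ) ≠ 0 := by exact_mod_cast ht.ne'
  have h2 : ((π : ℂ) / -b) ^ (1 / 2 : ℂ) = ((Real.sqrt (2 * π * t) : ℝ) : ℂ) := by
    have h1 : ((π : ℂ) / -b) = ((2 * π * t : ℝ) : ℂ) := by
      rw [hb]
      push_cast
      field_simp
    rw [h1, show ((1:ℂ)/2) = ((1/2 : ℝ) : ℂ) by norm_num,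
      ← Complex.ofReal_cpow (by positivity), Complex.ofReal_inj, Real.sqrt_eq_rpow]
  have harg : d - c ^ 2 / (4 * b) =
      (((lam ^ 2 - mu ^ 2) * t / 2 : ℝ) : ℂ) + ((lam * mu * t + phi : ℝ) : ℂ) * Complex.I := by
    rw [hb, hc, hd]
    push_cast
    field_simp
    ring_nf
    simp [Complex.I_sq]
    ring
  rw [h2, harg]
  rw [Complex.re_ofReal_mul, Complex.exp_re]
  have hres : ((((lam ^ 2 - mu ^ 2) * t / 2 : ℝ) : ℂ) + ((lam * mu * t + phi : ℝ) : ℂ) * Complex.I).re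
      = (lam ^ 2 - mu ^ 2) * t / 2 := by simp [← Complex.ofReal_pow]
  have hims : ((((lam ^ 2 - mu ^ 2) * t / 2 : ℝ) : ℂ) + ((lam * mu * t + phi : ℝ) : ℂ) * Complex.I).im
      = lam * mu * t + phi := by simp [← Complex.ofReal_pow]
  rw [hres, hims, ← mul_assoc, ← mul_assoc,
    inv_mul_cancel₀ (by positivity : Real.sqrt (2 * π * t) ≠ 0), one_mul]
end

section
/- Let t > 0 and λ, μ, φ ∈ ℝ. Then ∫ exp(λx) sin(μx + φ) d(gaussianReal 0 t)(x) = exp((λ² − μ²)t/2) sin(λμt + φ), where gaussianReal 0 t is the Gaussian probability measure on ℝ with mean 0 and variance t. -/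
open ProbabilityTheory MeasureTheory Complex Real

lemma gaussian_integral_to_lebesgue (v : NNReal) (hv : v ≠ 0) (F : ℝ → ℝ) :
    ∫ x, F x ∂(gaussianReal 0 v) = ∫ x, gaussianPDFReal 0 v x • F x := by
  rw [gaussianReal_of_var_ne_zero 0 hv]
  have h : (gaussianPDF 0 v) = fun x => ((gaussianPDFReal 0 v x).toNNReal : ENNReal) := by
    ext x; rw [gaussianPDF_def]; rfl
  rw [h, integral_withDensity_eq_integral_smul
    ((measurable_gaussianPDFReal 0 v).real_toNNReal) F]
  congr 1 with x
  simp [NNReal.smul_def, Real.coe_toNNReal _ (gaussianPDFReal_nonneg 0 v x)]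

/-- Gaussian integral: for the Gaussian measure on `ℝ` with mean `0` and variance `t > 0`,
`∫ exp(λx) sin(μx + φ) = exp((λ² - μ²)t/2) sin(λμt + φ)`. -/
theorem gaussian_integral_exp_mul_sin
    (t : ℝ) (ht : 0 < t) (lam mu phi : ℝ) :
    ∫ x, Real.exp (lam * x) * Real.sin (mu * x + phi)
        ∂(gaussianReal 0 ⟨t, ht.le⟩) =
      Real.exp ((lam ^ 2 - mu ^ 2) * t / 2) * Real.sin (lam * mu * t + phi) := by
  have hv : (⟨t, ht.le⟩ : NNReal) ≠ 0 := by
    simp [← NNReal.coe_ne_zero, ht.ne']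
  have htC : (t : ℂ) ≠ 0 := by exact_mod_cast ht.ne'
  rw [gaussian_integral_to_lebesgue _ hv]
  set b : ℂ := ((-(1 / (2 * t)) : ℝ) : ℂ) with hb
  have hbre : b.re < 0 := by
    rw [hb, Complex.ofReal_re]
    simp only [neg_neg, neg_lt_zero]
    positivity
  have hb0 : b ≠ 0 := fun h => by rw [h] at hbre; simp at hbre
  set z : ℂ := lam + mu * I with hz
  set C : ℝ := (Real.sqrt (2 * Real.pi * t))⁻¹ with hC
  set g : ℝ → ℂ := fun x => C * cexp (b * x ^ 2 + z * x + phi * I) with hg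
  have hgint : Integrable g := (integrable_cexp_quadratic' hbre z (phi * I)).const_mul _
  have him : ∀ x : ℝ, gaussianPDFReal 0 ⟨t, ht.le⟩ x •
      (Real.exp (lam * x) * Real.sin (mu * x + phi)) = (g x).im := by
    intro x
    have hw : (b * x ^ 2 + z * x + phi * I)
        = ((-(x - 0) ^ 2 / (2 * t) + lam * x : ℝ) : ℂ) + ((mu * x + phi : ℝ)) * I := by
      push_cast [hb, hz]
      field_simp
      ring
    rw [hg]
    simp only [hw, Complex.mul_im, Complex.ofReal_re, Complex.ofReal_im, Complex.exp_im,
      Complex.exp_re, Complex.add_re, Complex.add_im, Complex.mul_re, Complex.mul_im,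
      Complex.I_re, Complex.I_im, mul_zero, mul_one, zero_mul, sub_zero, add_zero, zero_add,
      gaussianPDFReal, NNReal.coe_mk, smul_eq_mul, Real.exp_add]
    rw [hC]
    change (√(2 * π * t))⁻¹ * rexp (-x ^ 2 / (2 * t)) * (rexp (lam * x) * Real.sin (mu * x + phi)) = (√(2 * π * t))⁻¹ * (rexp (-x ^ 2 / (2 * t)) * rexp (lam * x) * Real.sin (mu * x + phi))
    ring
  simp_rw [him]
  have hIm : ∫ x, (g x).im = (∫ x, g x).im := by
    simpa [RCLike.im_eq_complex_im] using integral_im (μ := (volume : Measure ℝ)) hgint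
  rw [hIm]
  have hcalc : ∫ x, g x = Complex.exp (((lam ^ 2 - mu ^ 2) * t / 2 : ℝ)
      + ((lam * mu * t + phi : ℝ)) * I) := by
    rw [hg, integral_const_mul, integral_cexp_quadratic hbre z (phi * I)]
    have h1 : (↑Real.pi / -b) = ((2 * Real.pi * t : ℝ) : ℂ) := by
      rw [hb]
      push_cast
      field_simp
    have h2 : ((↑Real.pi / -b) ^ (1 / 2 : ℂ)) = (Real.sqrt (2 * Real.pi * t) : ℂ) := by
      rw [h1, show (1 / 2 : ℂ) = ((1 / 2 : ℝ) : ℂ) by norm_num,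
        ← Complex.ofReal_cpow (by positivity)]
      norm_num [Real.sqrt_eq_rpow]
    have h3 : (↑phi * I - z ^ 2 / (4 * b)) = (((lam ^ 2 - mu ^ 2) * t / 2 : ℝ)
        + ((lam * mu * t + phi : ℝ)) * I) := by
      rw [hb, hz]
      push_cast
      field_simp
      ring_nf
      simp [Complex.I_sq]
      ring
    rw [h2, h3, hC]
    rw [← mul_assoc, ← Complex.ofReal_mul]
    rw [inv_mul_cancel₀ (by positivity : Real.sqrt (2 * Real.pi * t) ≠ 0)]
    simp
  rw [hcalc, Complex.exp_im]
  simp only [Complex.add_re, Complex.add_im, Complex.ofReal_re, Complex.ofReal_im,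
    Complex.mul_re, Complex.mul_im, Complex.I_re, Complex.I_im, mul_zero, mul_one,
    zero_mul, sub_zero, add_zero, zero_add]
end

section
/- Let 0 ≤ ε < 2, ω = √(4 − ε²)/2, σ ∈ ℝ, (q₀,p₀) ∈ ℝ², and let q̄(s) = e^{−εs/2}(q₀ cos ωs + (1/ω)(p₀ + (ε/2)q₀) sin ωs), p̄(s) = e^{−εs/2}(p₀ cos ωs − (1/ω)(q₀ + (ε/2)p₀) sin ωs). Then for every t > 0, ∫ (q̄(t + σw)² + p̄(t + σw)²)/2 d(gaussianReal 0 t)(w) = a exp(−ε(2 − εσ²)t/2) + exp(−((2 − ε²)σ² + ε)t) ( b cos(2(1 − εσ²)ωt) + c sin(2(1 − εσ²)ωt) ), where a = 2(q₀² + p₀² + ε q₀ p₀)/(4 − ε²), b = −(ε²(q₀² + p₀²) + 4ε q₀ p₀)/(2(4 − ε²)), and c = ε(q₀² − p₀²)/(2√(4 − ε²)). -/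
open ProbabilityTheory MeasureTheory Complex
open scoped NNReal ENNReal Real

/-- Gaussian complex exponential integral (MGF) plus integrability. -/
lemma gauss_cexp_integral (v : ℝ≥0) (hv : 0 < (v:ℝ)) (z u : ℂ) :
    (∫ w : ℝ, Complex.exp (u + z * w) ∂(gaussianReal 0 v)) = Complex.exp (u + z^2 * v / 2) ∧
    Integrable (fun w : ℝ => Complex.exp (u + z * w)) (gaussianReal 0 v) := by
  have hvne : v ≠ 0 := by simpa using hv.ne'
  have hre : (-(1/(2*(v:ℂ)))).re < 0 := by
    have h : (-(1/(2*(v:ℂ)))) = ((-(1/(2*(v:ℝ))) : ℝ) : ℂ) := by push_cast; ring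
    rw [h, Complex.ofReal_re]
    have : 0 < 1/(2*(v:ℝ)) := by positivity
    linarith
  have hsq : 0 < 2*Real.pi*(v:ℝ) := by positivity
  have hpdf : ∀ w : ℝ, (gaussianPDFReal 0 v w) • Complex.exp (u + z * w) =
      (Real.sqrt (2*Real.pi*v))⁻¹ • Complex.exp ((-(1/(2*(v:ℂ)))) * w^2 + z * w + u) := by
    intro w
    rw [gaussianPDFReal, mul_smul]
    congr 1
    rw [Complex.real_smul, Complex.ofReal_exp, ← Complex.exp_add]
    congr 1
    have hvne' : (v:ℂ) ≠ 0 := by exact_mod_cast hvne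
    push_cast
    field_simp
    ring
  have hmeas : Measurable fun x : ℝ => (gaussianPDFReal 0 v x).toNNReal :=
    (measurable_gaussianPDFReal 0 v).real_toNNReal
  have hgr : gaussianReal 0 v = volume.withDensity
      (fun x => ((gaussianPDFReal 0 v x).toNNReal : ℝ≥0∞)) := by
    rw [gaussianReal_of_var_ne_zero 0 hvne]; rfl
  have hpdf2 : ∀ w : ℝ, ((gaussianPDFReal 0 v w).toNNReal : ℝ≥0) • Complex.exp (u + z * w) =
      (Real.sqrt (2*Real.pi*v))⁻¹ • Complex.exp ((-(1/(2*(v:ℂ)))) * w^2 + z * w + u) := by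
    intro w
    rw [NNReal.smul_def, Real.coe_toNNReal _ (gaussianPDFReal_nonneg 0 v w)]
    exact hpdf w
  have hint : Integrable (fun w : ℝ => Complex.exp (u + z * w)) (gaussianReal 0 v) := by
    rw [hgr, integrable_withDensity_iff_integrable_smul hmeas]
    simp_rw [hpdf2]
    exact (integrable_cexp_quadratic' hre z u).smul (Real.sqrt (2*Real.pi*(v:ℝ)))⁻¹
  refine ⟨?_, hint⟩
  rw [hgr, integral_withDensity_eq_integral_smul hmeas]
  simp_rw [hpdf2]
  rw [integral_smul, integral_cexp_quadratic hre z u]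
  have h1 : ((Real.pi : ℂ) / -(-(1/(2*(v:ℂ))))) = ((2*Real.pi*(v:ℝ) : ℝ) : ℂ) := by
    have hvne' : (v:ℂ) ≠ 0 := by exact_mod_cast hvne
    push_cast
    field_simp
  rw [h1]
  have h2 : ((2*Real.pi*(v:ℝ) : ℝ) : ℂ) ^ (1/2 : ℂ) = ((Real.sqrt (2*Real.pi*(v:ℝ)) : ℝ) : ℂ) := by
    rw [Real.sqrt_eq_rpow, Complex.ofReal_cpow hsq.le]
    norm_num
  rw [h2]
  have h3 : u - z^2 / (4 * -(1/(2*(v:ℂ)))) = u + z^2 * v / 2 := by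
    have hvne' : (v:ℂ) ≠ 0 := by exact_mod_cast hvne
    field_simp
    ring
  rw [h3, Complex.real_smul, ← mul_assoc, ← Complex.ofReal_mul,
    inv_mul_cancel₀ (Real.sqrt_ne_zero'.mpr hsq)]
  simp

/-- Algebraic core of the Hamiltonian identity. -/
lemma kubo_core (e q p ω U V x y A B C : ℝ)
    (hωne : ω ≠ 0)
    (hU : ω*U = p + e/2*q) (hV : ω*V = q + e/2*p)
    (hA : 4*ω^2*A = 2*(q^2+p^2+e*q*p))
    (hB : 8*ω^2*B = -(e^2*(q^2+p^2)+4*e*q*p))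
    (hC : 4*ω*C = e*(q^2-p^2))
    (hxy : x^2+y^2 = 1) (hw : 4*ω^2 = 4 - e^2) :
    ((q*x+U*y)^2 + (p*x - V*y)^2)/2 = A + (B*(2*x^2-1) + C*(2*x*y)) := by
  have h8 : (8*ω^2) ≠ 0 := by positivity
  refine mul_left_cancel₀ h8 ?_
  linear_combination (4*y^2*(ω*U + (p + e/2*q)) + 8*ω*q*x*y) * hU
    + (4*y^2*(ω*V + (q + e/2*p)) - 8*ω*p*x*y) * hV
    - 2 * hA - (2*x^2-1) * hB - 4*ω*x*y * hC
    + (q^2+p^2)*x^2 * hw + ((q^2+p^2)*(4+e^2)+8*e*q*p) * hxy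

/-- Real part of `(b - c i) e^{X + Y i}`. -/
lemma re_aux (b c X Y : ℝ) :
    (((b:ℂ) - (c:ℂ)*Complex.I) * Complex.exp ((X:ℂ) + (Y:ℂ)*Complex.I)).re =
      Real.exp X * (b * Real.cos Y + c * Real.sin Y) := by
  have h : Complex.exp ((X:ℂ) + (Y:ℂ)*Complex.I) =
      ((Real.exp X : ℝ) : ℂ) * (((Real.cos Y : ℝ) : ℂ) + ((Real.sin Y : ℝ) : ℂ)*Complex.I) := by
    rw [Complex.exp_add, Complex.exp_mul_I]
    push_cast
    ring
  rw [h]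
  simp [Complex.mul_re, Complex.mul_im, Complex.exp_ofReal_re, Complex.exp_ofReal_im,
    Complex.cos_ofReal_re, Complex.sin_ofReal_re]
  ring

/-- Closed-form expected Hamiltonian of the damped Kubo oscillator: integrating
`H(q̄(t + σw), p̄(t + σw)) = (q̄(t+σw)² + p̄(t+σw)²)/2` against the Gaussian law of the
Wiener increment `W(t)` (mean `0`, variance `t`) gives the paper's formula. -/
theorem damped_kubo_expected_hamiltonian
    (ε : ℝ) (hε0 : 0 ≤ ε) (hε2 : ε < 2)
    (ω : ℝ) (hω : ω = Real.sqrt (4 - ε ^ 2) / 2) (σ : ℝ)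
    (q0 p0 : ℝ) (qbar pbar : ℝ → ℝ)
    (hqbar : qbar = fun s => Real.exp (-ε * s / 2) *
      (q0 * Real.cos (ω * s) + (1 / ω) * (p0 + (ε / 2) * q0) * Real.sin (ω * s)))
    (hpbar : pbar = fun s => Real.exp (-ε * s / 2) *
      (p0 * Real.cos (ω * s) - (1 / ω) * (q0 + (ε / 2) * p0) * Real.sin (ω * s)))
    (a b c : ℝ)
    (ha : a = 2 * (q0 ^ 2 + p0 ^ 2 + ε * q0 * p0) / (4 - ε ^ 2))
    (hb : b = -(ε ^ 2 * (q0 ^ 2 + p0 ^ 2) + 4 * ε * q0 * p0) / (2 * (4 - ε ^ 2)))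
    (hc : c = ε * (q0 ^ 2 - p0 ^ 2) / (2 * Real.sqrt (4 - ε ^ 2))) :
    ∀ t : ℝ, ∀ ht : 0 < t,
      ∫ w, (qbar (t + σ * w) ^ 2 + pbar (t + σ * w) ^ 2) / 2
          ∂(gaussianReal 0 ⟨t, ht.le⟩) =
        a * Real.exp (-ε * (2 - ε * σ ^ 2) * t / 2) +
          Real.exp (-((2 - ε ^ 2) * σ ^ 2 + ε) * t) *
            (b * Real.cos (2 * (1 - ε * σ ^ 2) * ω * t) +
              c * Real.sin (2 * (1 - ε * σ ^ 2) * ω * t)) := by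
  intro t ht
  have h4 : (0:ℝ) < 4 - ε ^ 2 := by nlinarith
  have hsq4 : Real.sqrt (4 - ε ^ 2) = 2 * ω := by rw [hω]; ring
  have hωpos : 0 < ω := by
    rw [hω]; positivity
  have hωne : ω ≠ 0 := hωpos.ne'
  have hw2 : 4 * ω ^ 2 = 4 - ε ^ 2 := by
    rw [hω]
    rw [div_pow, Real.sq_sqrt h4.le]
    ring
  -- pointwise identity for the Hamiltonian
  have key : ∀ s : ℝ, (qbar s ^ 2 + pbar s ^ 2) / 2 =
      a * Real.exp (-(ε*s)) +
        Real.exp (-(ε*s)) * (b * Real.cos (2*(ω*s)) + c * Real.sin (2*(ω*s))) := by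
    intro s
    rw [hqbar, hpbar]
    simp only
    have hE2 : Real.exp (-(ε*s)) = Real.exp (-ε * s / 2) ^ 2 := by
      rw [sq, ← Real.exp_add]; ring_nf
    rw [hE2, Real.cos_two_mul, Real.sin_two_mul]
    have hcore := kubo_core ε q0 p0 ω ((1/ω) * (p0 + (ε/2)*q0)) ((1/ω) * (q0 + (ε/2)*p0))
      (Real.cos (ω*s)) (Real.sin (ω*s)) a b c hωne
      (by field_simp) (by field_simp)
      (by rw [ha, ← hw2]; field_simp; try ring)
      (by rw [hb, ← hw2]; field_simp; try ring)
      (by rw [hc, hsq4]; field_simp; try ring)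
      (by rw [add_comm]; exact Real.sin_sq_add_cos_sq (ω*s)) hw2
    linear_combination (Real.exp (-ε * s / 2))^2 * hcore
  -- complex exponential representation
  set v : ℝ≥0 := ⟨t, ht.le⟩ with hvdef
  have hvt : (v : ℝ) = t := rfl
  have hvpos : 0 < (v : ℝ) := by rw [hvt]; exact ht
  set z₁ : ℂ := -(ε:ℂ) with hz₁
  set z₂ : ℂ := -(ε:ℂ) + 2*(ω:ℂ)*Complex.I with hz₂
  have G₁ := gauss_cexp_integral v hvpos (z₁ * σ) (z₁ * t)
  have G₂ := gauss_cexp_integral v hvpos (z₂ * σ) (z₂ * t)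
  have hFre : ∀ w : ℝ, (qbar (t + σ*w) ^ 2 + pbar (t + σ*w) ^ 2) / 2 =
      ((a:ℂ) * Complex.exp (z₁*t + (z₁*σ) * w) +
        ((b:ℂ) - (c:ℂ)*Complex.I) * Complex.exp (z₂*t + (z₂*σ) * w)).re := by
    intro w
    rw [key (t + σ*w)]
    have e1 : z₁*t + (z₁*σ) * w = ((-(ε*(t + σ*w)) : ℝ) : ℂ) := by
      rw [hz₁]; push_cast; ring
    have e2 : z₂*t + (z₂*σ) * w =
        ((-(ε*(t + σ*w)) : ℝ) : ℂ) + ((2*(ω*(t + σ*w)) : ℝ) : ℂ) * Complex.I := by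
      rw [hz₂]; push_cast; ring
    rw [e1, e2, Complex.add_re, re_aux, ← Complex.ofReal_exp, ← Complex.ofReal_mul,
      Complex.ofReal_re]
    try ring
  simp_rw [hFre]
  have hInt : Integrable (fun w : ℝ => (a:ℂ) * Complex.exp (z₁*t + (z₁*σ) * w) +
      ((b:ℂ) - (c:ℂ)*Complex.I) * Complex.exp (z₂*t + (z₂*σ) * w)) (gaussianReal 0 v) :=
    (G₁.2.const_mul _).add (G₂.2.const_mul _)
  have hre := integral_re (μ := gaussianReal 0 v) hInt
  simp only [RCLike.re_to_complex] at hre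
  rw [hre, integral_add (G₁.2.const_mul _) (G₂.2.const_mul _),
    integral_const_mul, integral_const_mul, G₁.1, G₂.1]
  -- compute the two exponents
  have hw2c : 4 * (ω:ℂ)^2 = 4 - (ε:ℂ)^2 := by exact_mod_cast hw2
  have e1 : z₁*t + (z₁*σ)^2 * (v:ℝ) / 2 = ((-ε * (2 - ε * σ ^ 2) * t / 2 : ℝ) : ℂ) := by
    rw [hz₁, hvt]; push_cast; ring
  have e2 : z₂*t + (z₂*σ)^2 * (v:ℝ) / 2 =
      ((-((2 - ε ^ 2) * σ ^ 2 + ε) * t : ℝ) : ℂ) +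
        ((2 * (1 - ε * σ ^ 2) * ω * t : ℝ) : ℂ) * Complex.I := by
    rw [hz₂, hvt]
    push_cast
    linear_combination (2*(ω:ℂ)^2*(σ:ℂ)^2*(t:ℂ)) * Complex.I_sq
      + (-(σ:ℂ)^2*(t:ℂ)/2) * hw2c
  rw [e1, e2, Complex.add_re, re_aux, ← Complex.ofReal_exp, ← Complex.ofReal_mul,
    Complex.ofReal_re]
end
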